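/- arXiv:1706.04418 — 2 statements merged into one kernel-verified Lean document; each statement's English description precedes it below -/
import Mathlib

section
/- Let l ∈ {2, 3}, k > 0, R > 0. Then for every natural number n ≥ 1, ∫_0^R r^{l−1} · j_n(kr)² dr ≤ e^{k²R²} · (e·k/(2n))^{2n} · R^{2n+l} / (2n+l). -/
/-!
Bounding every term of the series of `j_n` by `|x|^n / (2n+1)‼` times the corresponding term of
the exponential series gives `|j_n(x)| ≤ |x|^n e^{x²/2} / (2n+1)‼`.  Since
`(2n+1)‼ ≥ (2n)‼ = 2^n n! ≥ (2n/e)^n`, this yields `j_n(x)² ≤ (e x / 2n)^{2n} e^{x²}`, so on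
`[0, R]` the integrand is at most `e^{k²R²} (e k / 2n)^{2n} r^{2n+l-1}`, whose integral is the
right-hand side.
-/

open Real Nat

/-- The spherical Bessel function of order `n`, defined by its everywhere absolutely convergent
power series `j_n(x) = Σ_{m=0}^∞ (−1)^m x^{2m+n} / (2^m · m! · (2n+2m+1)!!)`. -/
noncomputable def sphericalBesselJ (n : ℕ) (x : ℝ) : ℝ :=
  ∑' m : ℕ, (-1 : ℝ) ^ m * x ^ (2 * m + n) /
    (2 ^ m * (m.factorial : ℝ) * ((2 * n + 2 * m + 1)‼ : ℝ))

namespace Nat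

theorem doubleFactorial_le_succ : ∀ n : ℕ, n‼ ≤ (n + 1)‼
  | 0 => le_rfl
  | 1 => by decide
  | n + 2 => by
    rw [doubleFactorial_add_two, show n + 2 + 1 = n + 1 + 2 by ring, doubleFactorial_add_two]
    exact Nat.mul_le_mul (by omega) (doubleFactorial_le_succ n)

theorem monotone_doubleFactorial : Monotone doubleFactorial :=
  monotone_nat_of_le_succ doubleFactorial_le_succ

end Nat

theorem pow_div_exp_le_doubleFactorial (n : ℕ) : (2 * n / exp 1) ^ n ≤ ((2 * n + 1)‼ : ℝ) := by
  rw [div_pow, div_le_iff₀ (by positivity)]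
  calc ((2 : ℝ) * n) ^ n = 2 ^ n * n ! * ((n : ℝ) ^ n / n !) := by field_simp; ring
    _ ≤ 2 ^ n * n ! * exp n := by gcongr; exact pow_div_factorial_le_exp _ n.cast_nonneg n
    _ = ((2 * n)‼ : ℝ) * exp 1 ^ n := by
      rw [doubleFactorial_two_mul, ← exp_nat_mul, mul_one]; push_cast; ring
    _ ≤ ((2 * n + 1)‼ : ℝ) * exp 1 ^ n := by
      gcongr; exact_mod_cast monotone_doubleFactorial (le_succ _)

theorem abs_sphericalBesselJ_le (n : ℕ) (x : ℝ) :
    |sphericalBesselJ n x| ≤ |x| ^ n * exp (x ^ 2 / 2) / (2 * n + 1)‼ := by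
  have hexp : HasSum (fun m : ℕ ↦ |x| ^ n / (2 * n + 1)‼ * ((x ^ 2 / 2) ^ m / m !))
      (|x| ^ n * exp (x ^ 2 / 2) / (2 * n + 1)‼) := by
    rw [mul_div_right_comm, exp_eq_exp_ℝ]
    exact (NormedSpace.expSeries_div_hasSum_exp (x ^ 2 / 2)).mul_left (|x| ^ n / (2 * n + 1)‼)
  rw [← Real.norm_eq_abs, sphericalBesselJ]
  refine tsum_of_norm_bounded hexp fun m ↦ ?_
  have hdf : ((2 * n + 1)‼ : ℝ) ≤ (2 * n + 2 * m + 1)‼ := by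
    exact_mod_cast monotone_doubleFactorial (by omega)
  calc ‖(-1 : ℝ) ^ m * x ^ (2 * m + n) / (2 ^ m * m ! * (2 * n + 2 * m + 1)‼)‖
      = |x| ^ n * (x ^ 2) ^ m / (2 ^ m * m ! * (2 * n + 2 * m + 1)‼) := by
        rw [norm_div, norm_mul, norm_pow, norm_neg, norm_one, one_pow, one_mul, norm_pow,
          Real.norm_eq_abs, Real.norm_of_nonneg (by positivity), pow_add, pow_mul, sq_abs,
          mul_comm]
    _ ≤ |x| ^ n * (x ^ 2) ^ m / (2 ^ m * m ! * (2 * n + 1)‼) := by gcongr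
    _ = |x| ^ n / (2 * n + 1)‼ * ((x ^ 2 / 2) ^ m / m !) := by rw [div_pow]; field_simp

theorem inv_doubleFactorial_le_pow (n : ℕ) : ((2 * n + 1)‼ : ℝ)⁻¹ ≤ (exp 1 / (2 * n)) ^ n := by
  rcases n.eq_zero_or_pos with rfl | hn
  · simp
  rw [← inv_div, inv_pow]
  exact inv_anti₀ (by positivity) (pow_div_exp_le_doubleFactorial n)

theorem sphericalBesselJ_sq_le (n : ℕ) (x : ℝ) :
    sphericalBesselJ n x ^ 2 ≤ (exp 1 * x / (2 * n)) ^ (2 * n) * exp (x ^ 2) :=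
  calc sphericalBesselJ n x ^ 2 = |sphericalBesselJ n x| ^ 2 := (sq_abs _).symm
    _ ≤ (|x| ^ n * exp (x ^ 2 / 2) / (2 * n + 1)‼) ^ 2 := by
      gcongr; exact abs_sphericalBesselJ_le n x
    _ = (x ^ 2) ^ n * exp (x ^ 2) * (((2 * n + 1)‼ : ℝ)⁻¹) ^ 2 := by
      rw [div_pow, mul_pow, ← pow_mul, pow_mul', sq_abs, ← exp_nat_mul]; push_cast; ring_nf
    _ ≤ (x ^ 2) ^ n * exp (x ^ 2) * ((exp 1 / (2 * n)) ^ n) ^ 2 := by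
      gcongr; exact inv_doubleFactorial_le_pow n
    _ = (exp 1 * x / (2 * n)) ^ (2 * n) * exp (x ^ 2) := by ring

theorem integral_pow_sub_one {m : ℕ} (hm : m ≠ 0) (b : ℝ) :
    ∫ x in (0 : ℝ)..b, x ^ (m - 1) = b ^ m / m := by
  obtain ⟨m, rfl⟩ := exists_eq_succ_of_ne_zero hm
  simp [integral_pow]

theorem pow_mul_sphericalBesselJ_sq_le {l : ℕ} (hl : 1 ≤ l) (n : ℕ) (k : ℝ) {r R : ℝ}
    (hr : 0 ≤ r) (hrR : r ≤ R) :
    r ^ (l - 1) * sphericalBesselJ n (k * r) ^ 2 ≤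
      exp (k ^ 2 * R ^ 2) * (exp 1 * k / (2 * n)) ^ (2 * n) * r ^ (2 * n + l - 1) := by
  have hexp : exp ((k * r) ^ 2) ≤ exp (k ^ 2 * R ^ 2) := by
    rw [exp_le_exp, mul_pow]; gcongr
  calc r ^ (l - 1) * sphericalBesselJ n (k * r) ^ 2
      ≤ r ^ (l - 1) * ((exp 1 * (k * r) / (2 * n)) ^ (2 * n) * exp ((k * r) ^ 2)) := by
        gcongr; exact sphericalBesselJ_sq_le n (k * r)
    _ ≤ r ^ (l - 1) * ((exp 1 * (k * r) / (2 * n)) ^ (2 * n) * exp (k ^ 2 * R ^ 2)) := by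
        have hpow := (even_two_mul n).pow_nonneg (exp 1 * (k * r) / (2 * n))
        exact mul_le_mul_of_nonneg_left (mul_le_mul_of_nonneg_left hexp hpow) (by positivity)
    _ = exp (k ^ 2 * R ^ 2) * (exp 1 * k / (2 * n)) ^ (2 * n) * r ^ (2 * n + l - 1) := by
        rw [show exp 1 * (k * r) / (2 * n) = exp 1 * k / (2 * n) * r by ring, mul_pow,
          Nat.add_sub_assoc hl, pow_add]
        ring

theorem integral_sphericalBesselJ_sq_upper_bound_general (l : ℕ) (hl : l = 2 ∨ l = 3)
    (k R : ℝ) (hR : 0 < R) (n : ℕ) :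
    ∫ r in (0 : ℝ)..R, r ^ (l - 1) * sphericalBesselJ n (k * r) ^ 2 ≤
      Real.exp (k ^ 2 * R ^ 2) * (Real.exp 1 * k / (2 * n)) ^ (2 * n) *
        R ^ (2 * n + l) / (2 * n + l : ℝ) := by
  have hl₁ : 1 ≤ l := by omega
  set C := exp (k ^ 2 * R ^ 2) * (exp 1 * k / (2 * n)) ^ (2 * n)
  calc ∫ r in (0 : ℝ)..R, r ^ (l - 1) * sphericalBesselJ n (k * r) ^ 2
      ≤ ∫ r in (0 : ℝ)..R, C * r ^ (2 * n + l - 1) := by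
        simp only [intervalIntegral.integral_of_le hR.le]
        refine MeasureTheory.integral_mono_of_nonneg ?_ ?_ ?_
        · exact MeasureTheory.ae_restrict_of_forall_mem measurableSet_Ioc
            fun r hr ↦ mul_nonneg (pow_nonneg hr.1.le _) (sq_nonneg _)
        · exact (continuous_const.mul (continuous_pow _)).integrableOn_Ioc
        · exact MeasureTheory.ae_restrict_of_forall_mem measurableSet_Ioc
            fun r hr ↦ pow_mul_sphericalBesselJ_sq_le hl₁ n k hr.1.le hr.2
    _ = C * R ^ (2 * n + l) / (2 * n + l : ℝ) := by
        rw [intervalIntegral.integral_const_mul, integral_pow_sub_one (by omega), mul_div_assoc]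
        push_cast; rfl

/-- Let `l ∈ {2, 3}`, `k > 0`, `R > 0`.  Then for every natural number `n ≥ 1`,
`∫_0^R r^{l−1} · j_n(kr)² dr ≤ e^{k²R²} · (e·k/(2n))^{2n} · R^{2n+l} / (2n+l)`. -/
theorem integral_sphericalBesselJ_sq_upper_bound (l : ℕ) (hl : l = 2 ∨ l = 3)
    (k R : ℝ) (hk : 0 < k) (hR : 0 < R) (n : ℕ) (hn : 1 ≤ n) :
    ∫ r in (0 : ℝ)..R, r ^ (l - 1) * sphericalBesselJ n (k * r) ^ 2 ≤
      Real.exp (k ^ 2 * R ^ 2) * (Real.exp 1 * k / (2 * n)) ^ (2 * n) *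
        R ^ (2 * n + l) / (2 * n + l : ℝ) :=
  integral_sphericalBesselJ_sq_upper_bound_general l hl k R hR n
end

section
/- Let l ∈ {2, 3}, k > 0, R > 0 and 0 < ε < e^{−1}. Then there exists N₀ ∈ ℕ (depending on ε, R, k) such that for all natural numbers n ≥ N₀, ∫_0^R r^{l−1} · j_n(kr)² dr ≥ (1−ε)² · e^{2n+1} · k^{2n} · R^{2n+l} / (2 · (2n+1)^{2n+2} · (2n+l)). -/
/-!
For `0 ≤ x` with `x² ≤ 2(2n+3)` the series of `j_n(x)` is alternating with decreasing terms, so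
`j_n(x) ≥ xⁿ/(2n+1)‼ · (1 - x²/(2(2n+3)))`, and on `[0, kR]` the correction factor tends to `1`
as `n → ∞`. Stirling's formula applied to `(2n+1)‼ = (2n+1)!/(2ⁿ n!)` gives
`(2n+1)‼ ~ √2 (2n+1)^(n+1) e^(-(n+1/2))`. Hence for large `n`,
`j_n(x)² ≥ (1-ε)² e^(2n+1) x^(2n) / (2(2n+1)^(2n+2))` on `[0, kR]`, and integrating
`r^(l-1) (kr)^(2n)` over `[0, R]` gives the bound.
-/

open Real Nat

open Filter Topology Set

noncomputable def sphericalBesselJTerm (n : ℕ) (x : ℝ) (m : ℕ) : ℝ :=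
  x ^ (2 * m + n) / (2 ^ m * (m.factorial : ℝ) * ((2 * n + 2 * m + 1)‼ : ℝ))

lemma sphericalBesselJ_eq_tsum (n : ℕ) (x : ℝ) :
    sphericalBesselJ n x = ∑' m, (-1) ^ m * sphericalBesselJTerm n x m := by
  simp only [sphericalBesselJ, sphericalBesselJTerm, mul_div_assoc]

lemma abs_sphericalBesselJTerm_le {n : ℕ} {x M : ℝ} (hx : |x| ≤ M) (m : ℕ) :
    |sphericalBesselJTerm n x m| ≤ M ^ n * ((M ^ 2 / 2) ^ m / m.factorial) := by
  have hdf : (1 : ℝ) ≤ (2 * n + 2 * m + 1)‼ := mod_cast Nat.doubleFactorial_pos _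
  have hden : (0 : ℝ) < 2 ^ m * m.factorial * (2 * n + 2 * m + 1)‼ := by positivity
  calc |sphericalBesselJTerm n x m|
      = |x| ^ (2 * m + n) / (2 ^ m * m.factorial * (2 * n + 2 * m + 1)‼) := by
        rw [sphericalBesselJTerm, abs_div, abs_pow, abs_of_pos hden]
    _ ≤ |x| ^ (2 * m + n) / (2 ^ m * m.factorial) :=
        div_le_div_of_nonneg_left (by positivity) (by positivity) (le_mul_of_one_le_right
          (by positivity) hdf)
    _ ≤ M ^ (2 * m + n) / (2 ^ m * m.factorial) := by gcongr
    _ = M ^ n * ((M ^ 2 / 2) ^ m / m.factorial) := by rw [div_pow, ← pow_mul, pow_add]; ring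

lemma summable_sphericalBesselJTerm (n : ℕ) (x : ℝ) : Summable (sphericalBesselJTerm n x) :=
  .of_norm_bounded ((Real.summable_pow_div_factorial _).mul_left _)
    fun m => abs_sphericalBesselJTerm_le le_rfl m

@[fun_prop]
lemma continuous_sphericalBesselJ (n : ℕ) : Continuous (sphericalBesselJ n) := by
  refine continuous_iff_continuousAt.2 fun x₀ => ?_
  have hM : ContinuousOn (sphericalBesselJ n) (Metric.closedBall 0 (|x₀| + 1)) := by
    simp only [funext (sphericalBesselJ_eq_tsum n)]
    refine continuousOn_tsum (fun m => by unfold sphericalBesselJTerm; fun_prop)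
      ((Real.summable_pow_div_factorial ((|x₀| + 1) ^ 2 / 2)).mul_left ((|x₀| + 1) ^ n))
      fun m x hx => ?_
    rw [norm_mul, norm_pow, norm_neg, norm_one, one_pow, one_mul, Real.norm_eq_abs]
    exact abs_sphericalBesselJTerm_le (by simpa using hx) m
  exact hM.continuousAt (Metric.closedBall_mem_nhds_of_mem (by simp))

lemma sphericalBesselJTerm_succ (n : ℕ) (x : ℝ) (m : ℕ) :
    sphericalBesselJTerm n x (m + 1) =
      sphericalBesselJTerm n x m * (x ^ 2 / (2 * (m + 1) * (2 * n + 2 * m + 3))) := by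
  have h : 2 * n + 2 * (m + 1) + 1 = 2 * n + 2 * m + 1 + 2 := by ring
  simp only [sphericalBesselJTerm, h, Nat.doubleFactorial_add_two, Nat.factorial_succ]
  push_cast
  field_simp
  ring

lemma antitone_sphericalBesselJTerm {n : ℕ} {x : ℝ} (hx : 0 ≤ x)
    (hx2 : x ^ 2 ≤ 2 * (2 * n + 3)) : Antitone (sphericalBesselJTerm n x) := by
  refine antitone_nat_of_succ_le fun m => ?_
  rw [sphericalBesselJTerm_succ]
  refine mul_le_of_le_one_right (by unfold sphericalBesselJTerm; positivity)
    ((div_le_one (by positivity)).2 (hx2.trans ?_))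
  nlinarith [(m.cast_nonneg : (0 : ℝ) ≤ m)]

lemma pow_div_doubleFactorial_mul_le_sphericalBesselJ {n : ℕ} {x : ℝ} (hx : 0 ≤ x)
    (hx2 : x ^ 2 ≤ 2 * (2 * n + 3)) :
    x ^ n / (2 * n + 1)‼ * (1 - x ^ 2 / (2 * (2 * n + 3))) ≤ sphericalBesselJ n x := by
  have h := (antitone_sphericalBesselJTerm hx hx2).alternating_series_le_tendsto
    (summable_sphericalBesselJTerm n x).tendsto_alternating_series_tsum 1
  rw [← sphericalBesselJ_eq_tsum] at h
  have ht0 : sphericalBesselJTerm n x 0 = x ^ n / (2 * n + 1)‼ := by simp [sphericalBesselJTerm]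
  rw [Finset.sum_range_succ, Finset.sum_range_one, sphericalBesselJTerm_succ, ht0] at h
  refine le_of_eq_of_le ?_ h
  push_cast
  ring

lemma doubleFactorial_sq_mul_exp_div_eq_stirlingSeq {n : ℕ} (hn : n ≠ 0) :
    ((2 * n + 1)‼ : ℝ) ^ 2 * exp (2 * n + 1) / (2 * (2 * n + 1) ^ (2 * n + 2)) =
      (Stirling.stirlingSeq (2 * n + 1) / Stirling.stirlingSeq n) ^ 2 *
        (1 + 1 / (2 * n)) ^ (2 * n + 1) / exp 1 := by
  have hfac : ((2 * n + 1)! : ℝ) = (2 * n + 1)‼ * (2 ^ n * n !) := by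
    rw [Nat.factorial_eq_mul_doubleFactorial, Nat.doubleFactorial_two_mul]; push_cast; ring
  have hexp : exp (2 * n + 1) = exp 1 ^ (2 * n + 1) := by
    rw [← Real.exp_nat_mul]; push_cast; ring_nf
  have hone : 1 + 1 / (2 * n : ℝ) = (2 * n + 1) / (2 * n) := by field_simp
  simp only [Stirling.stirlingSeq, hfac, hexp, hone, div_pow, mul_pow, div_div_div_eq, ← pow_mul]
  rw [Real.sq_sqrt (by positivity), Real.sq_sqrt (by positivity)]
  push_cast
  field_simp
  ring

lemma tendsto_doubleFactorial_sq_mul_exp_div :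
    Tendsto (fun n : ℕ =>
      ((2 * n + 1)‼ : ℝ) ^ 2 * exp (2 * n + 1) / (2 * (2 * n + 1) ^ (2 * n + 2))) atTop (𝓝 1) := by
  have h2n : Tendsto (fun n : ℕ => 2 * n) atTop atTop := tendsto_id.const_mul_atTop' two_pos
  have hratio : Tendsto (fun n => Stirling.stirlingSeq (2 * n + 1) / Stirling.stirlingSeq n)
      atTop (𝓝 1) := by
    have := (Stirling.tendsto_stirlingSeq_sqrt_pi.comp ((tendsto_add_atTop_nat 1).comp h2n)).div
      Stirling.tendsto_stirlingSeq_sqrt_pi (Real.sqrt_ne_zero'.2 pi_pos)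
    rwa [div_self (Real.sqrt_ne_zero'.2 pi_pos)] at this
  have hpow :
      Tendsto (fun n : ℕ => (1 + 1 / (2 * n : ℝ)) ^ (2 * n + 1)) atTop (𝓝 (exp 1)) := by
    have := ((Real.tendsto_one_add_div_pow_exp 1).comp h2n).mul
      ((tendsto_one_div_atTop_nhds_zero_nat.comp h2n).const_add 1)
    simpa [pow_succ] using this
  have := ((hratio.pow 2).mul hpow).div_const (exp 1)
  rw [one_pow, one_mul, div_self (exp_pos 1).ne'] at this
  refine this.congr' ?_
  filter_upwards [eventually_ne_atTop 0] with n hn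
  exact (doubleFactorial_sq_mul_exp_div_eq_stirlingSeq hn).symm

lemma eventually_le_sphericalBesselJ_sq {ε : ℝ} (hε : 0 < ε) (hε1 : ε < 1) (M : ℝ) :
    ∀ᶠ n : ℕ in atTop, ∀ x ∈ Icc 0 M,
      (1 - ε) ^ 2 * exp (2 * n + 1) / (2 * (2 * n + 1) ^ (2 * n + 2)) * x ^ (2 * n) ≤
        sphericalBesselJ n x ^ 2 := by
  have hy : Tendsto (fun n : ℕ => M ^ 2 / (2 * (2 * n + 3))) atTop (𝓝 0) := by
    refine tendsto_const_nhds.div_atTop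
      ((tendsto_atTop_add_const_right _ _ ?_).const_mul_atTop two_pos)
    exact tendsto_natCast_atTop_atTop.const_mul_atTop two_pos
  have hlt : ∀ᶠ n : ℕ in atTop,
      (1 - ε) ^ 2 *
          (((2 * n + 1)‼ : ℝ) ^ 2 * exp (2 * n + 1) / (2 * (2 * n + 1) ^ (2 * n + 2))) <
        (1 - M ^ 2 / (2 * (2 * n + 3))) ^ 2 := by
    refine (tendsto_doubleFactorial_sq_mul_exp_div.const_mul _).eventually_lt
      ((hy.const_sub 1).pow 2) ?_
    nlinarith
  filter_upwards [hlt, hy.eventually (gt_mem_nhds one_pos)] with n hlt hy1 x ⟨hx0, hxM⟩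
  have hx2 : x ^ 2 / (2 * (2 * n + 3)) ≤ M ^ 2 / (2 * (2 * n + 3)) := by gcongr
  have hj : x ^ n / (2 * n + 1)‼ * (1 - M ^ 2 / (2 * (2 * n + 3))) ≤ sphericalBesselJ n x :=
    le_trans (by gcongr) (pow_div_doubleFactorial_mul_le_sphericalBesselJ hx0
      ((div_le_one (by positivity)).1 (hx2.trans hy1.le)))
  calc (1 - ε) ^ 2 * exp (2 * n + 1) / (2 * (2 * n + 1) ^ (2 * n + 2)) * x ^ (2 * n)
      = (1 - ε) ^ 2 *
          (((2 * n + 1)‼ : ℝ) ^ 2 * exp (2 * n + 1) / (2 * (2 * n + 1) ^ (2 * n + 2))) *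
          (x ^ n / (2 * n + 1)‼) ^ 2 := by
        field_simp; ring
    _ ≤ (1 - M ^ 2 / (2 * (2 * n + 3))) ^ 2 * (x ^ n / (2 * n + 1)‼) ^ 2 := by gcongr
    _ ≤ sphericalBesselJ n x ^ 2 := by
        rw [← mul_pow, mul_comm]
        exact pow_le_pow_left₀ (mul_nonneg (by positivity) (by linarith)) hj 2

lemma integral_pow_pred_mul_pow {l : ℕ} (hl : 1 ≤ l) (j : ℕ) (R : ℝ) :
    ∫ r in (0 : ℝ)..R, r ^ (l - 1) * r ^ j = R ^ (j + l) / (j + l) := by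
  have hexp : l - 1 + j + 1 = j + l := by omega
  simp only [← pow_add, integral_pow, hexp, zero_pow (show j + l ≠ 0 by omega), sub_zero]
  push_cast [Nat.cast_sub hl]
  ring

/-- Let `l ∈ {2, 3}`, `k > 0`, `R > 0` and `0 < ε < e⁻¹`.  Then there exists
`N₀ ∈ ℕ` (depending on `ε, R, k`) such that for all natural numbers `n ≥ N₀`,
`∫_0^R r^{l−1} · j_n(kr)² dr ≥ (1−ε)² · e^{2n+1} · k^{2n} · R^{2n+l} / (2 · (2n+1)^{2n+2} · (2n+l))`. -/
theorem integral_sphericalBesselJ_sq_lower_bound (l : ℕ) (hl : l = 2 ∨ l = 3)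
    (k R ε : ℝ) (hk : 0 < k) (hR : 0 < R) (hε : 0 < ε) (hε' : ε < (Real.exp 1)⁻¹) :
    ∃ N₀ : ℕ, ∀ n : ℕ, N₀ ≤ n →
      (1 - ε) ^ 2 * Real.exp (2 * (n : ℝ) + 1) * k ^ (2 * n) * R ^ (2 * n + l) /
          (2 * (2 * (n : ℝ) + 1) ^ (2 * n + 2) * (2 * n + l : ℝ)) ≤
        ∫ r in (0 : ℝ)..R, r ^ (l - 1) * sphericalBesselJ n (k * r) ^ 2 := by
  have hl1 : 1 ≤ l := by omega
  have hε1 : ε < 1 := hε'.trans (inv_lt_one_of_one_lt₀ (one_lt_exp_iff.2 one_pos))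
  obtain ⟨N₀, hN₀⟩ := eventually_atTop.1 (eventually_le_sphericalBesselJ_sq hε hε1 (k * R))
  refine ⟨N₀, fun n hn => ?_⟩
  set C := (1 - ε) ^ 2 * exp (2 * n + 1) / (2 * (2 * n + 1) ^ (2 * n + 2))
  have hbound : ∀ r ∈ Icc 0 R, r ^ (l - 1) * (C * k ^ (2 * n) * r ^ (2 * n)) ≤
      r ^ (l - 1) * sphericalBesselJ n (k * r) ^ 2 := fun r ⟨hr0, hrR⟩ => by
    rw [mul_assoc C, ← mul_pow]
    exact mul_le_mul_of_nonneg_left (hN₀ n hn _ ⟨by positivity, by gcongr⟩) (by positivity)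
  calc _ = C * k ^ (2 * n) * ∫ r in (0 : ℝ)..R, r ^ (l - 1) * r ^ (2 * n) := by
        rw [integral_pow_pred_mul_pow hl1]; simp only [C]; push_cast; field_simp
    _ = ∫ r in (0 : ℝ)..R, r ^ (l - 1) * (C * k ^ (2 * n) * r ^ (2 * n)) := by
        rw [← intervalIntegral.integral_const_mul]; congr 1; ext r; ring
    _ ≤ _ := intervalIntegral.integral_mono_on hR.le
        (Continuous.intervalIntegrable (by fun_prop) _ _)
        (Continuous.intervalIntegrable (by fun_prop) _ _) hbound
end
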